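/- Let u₁ = x, v₁ = y, and u_{i+1} = u_i v_i, v_{i+1} = v_i u_i in the free group F₂ on x, y. Then for every m ≥ 3, the word u_m v_m^{-1} lies in F₂' and its winding invariant equals (1 − X^{2^{m−3}} Y^{2^{m−3}})(1 − X^{2^{m−4}} Y^{2^{m−4}}) ⋯ (1 − XY). -/

import Mathlib

/-- The free group on two generators `x = of true`, `y = of false`. -/
abbrev F2 := FreeGroup Bool
/-- The generator `x`. -/
def xx : F2 := FreeGroup.of true
/-- The generator `y`. -/
def yy : F2 := FreeGroup.of false
/-- The ring of Laurent polynomials `ℤ[X^{±1}, Y^{±1}]`. -/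
abbrev L := AddMonoidAlgebra ℤ (ℤ × ℤ)
/-- The monomial `X^i Y^j`. -/
noncomputable def mono (i j : ℤ) : L := AddMonoidAlgebra.single (i, j) 1
/-- Total exponent of `x` in a word of `F2`. -/
def expx (u : F2) : ℤ :=
  Multiplicative.toAdd (FreeGroup.lift (fun b => Multiplicative.ofAdd (if b then (1 : ℤ) else 0)) u)
/-- Total exponent of `y` in a word of `F2`. -/
def expy (u : F2) : ℤ :=
  Multiplicative.toAdd (FreeGroup.lift (fun b => Multiplicative.ofAdd (if b then (0 : ℤ) else 1)) u)

/-- The Morse words: `morse (m-1) = (u_m, v_m)` with `u₁ = x`, `v₁ = y`,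
`u_{i+1} = u_i v_i`, `v_{i+1} = v_i u_i`. -/
def morse : ℕ → F2 × F2
  | 0 => (xx, yy)
  | m + 1 => ((morse m).1 * (morse m).2, (morse m).2 * (morse m).1)

open scoped commutatorElement

/-!
Since `u_{n+1} v_{n+1}⁻¹ = u_n v_n (v_n u_n)⁻¹ = ⁅u_n, v_n⁆`, it suffices to compute the winding
invariant of `⁅u_n, v_n⁆`. The identity `⁅ab, ba⁆ = (ab) ⁅a, b⁆⁻¹ (ab)⁻¹ ⁅a, b⁆` turns each step
of the Morse recursion into multiplication by `1 - X^e Y^e`, where `e = 2^n` is the exponent of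
`x` (and of `y`) in `u_n v_n`.
-/

section Group

variable {G : Type*} [Group G]

theorem mul_mul_inv_swap_eq_commutatorElement (a b : G) : a * b * (b * a)⁻¹ = ⁅a, b⁆ := by
  simp only [commutatorElement_def]
  group

theorem commutatorElement_mul_swap (a b : G) :
    ⁅a * b, b * a⁆ = a * b * ⁅a, b⁆⁻¹ * (a * b)⁻¹ * ⁅a, b⁆ := by
  simp only [commutatorElement_def]
  group

theorem map_inv_of_map_mul {A : Type*} [AddGroup A] {f : G → A}
    (hf : ∀ a b, f (a * b) = f a + f b) (a : G) : f a⁻¹ = -f a := by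
  have hf_one : f 1 = 0 := by simpa using (hf 1 1).symm
  exact eq_neg_of_add_eq_zero_left (by rw [← hf, inv_mul_cancel, hf_one])

def commutatorMk (a b : G) : commutator G :=
  ⟨⁅a, b⁆, Subgroup.commutator_mem_commutator (Subgroup.mem_top a) (Subgroup.mem_top b)⟩

end Group

theorem map_morse_mul {M : Type*} [CommMonoid M] (φ : F2 →* M) (n : ℕ) :
    φ ((morse n).1 * (morse n).2) = φ (xx * yy) ^ 2 ^ n := by
  induction n with
  | zero => simp [morse]
  | succ n ih =>
    calc φ ((morse (n + 1)).1 * (morse (n + 1)).2)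
        = φ ((morse n).1 * (morse n).2) * φ ((morse n).2 * (morse n).1) := map_mul φ _ _
      _ = φ ((morse n).1 * (morse n).2) ^ 2 := by simp only [map_mul, mul_comm, sq]
      _ = φ (xx * yy) ^ 2 ^ (n + 1) := by rw [ih, ← pow_mul, pow_succ]

theorem expx_morse_mul (n : ℕ) : expx ((morse n).1 * (morse n).2) = 2 ^ n := by
  simp [expx, map_morse_mul, xx, yy]

theorem expy_morse_mul (n : ℕ) : expy ((morse n).1 * (morse n).2) = 2 ^ n := by
  simp [expy, map_morse_mul, xx, yy]

theorem mono_mul (a b c d : ℤ) : mono a b * mono c d = mono (a + c) (b + d) := by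
  simp [mono, AddMonoidAlgebra.single_mul_single]

theorem mono_one_one_pow (k : ℕ) : mono 1 1 ^ k = mono k k := by
  induction k with
  | zero => rfl
  | succ k ih => rw [pow_succ, ih, mono_mul]; push_cast; rfl

section Winding

variable (W : commutator F2 → L) (hadd : ∀ z w : commutator F2, W (z * w) = W z + W w)
  (hconj : ∀ (u : F2) (z : commutator F2) (h : u * ↑z * u⁻¹ ∈ commutator F2),
    W ⟨u * ↑z * u⁻¹, h⟩ = mono (expx u) (expy u) * W z)

include hadd hconj in
theorem winding_commutatorMk_mul_swap (a b : F2) :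
    W (commutatorMk (a * b) (b * a)) =
      (1 - mono (expx (a * b)) (expy (a * b))) * W (commutatorMk a b) := by
  set c := commutatorMk a b
  have hmem : a * b * ↑c⁻¹ * (a * b)⁻¹ ∈ commutator F2 :=
    Subgroup.Normal.conj_mem inferInstance _ c⁻¹.2 (a * b)
  have hsplit : commutatorMk (a * b) (b * a) = ⟨a * b * ↑c⁻¹ * (a * b)⁻¹, hmem⟩ * c :=
    Subtype.ext (commutatorElement_mul_swap a b)
  rw [hsplit, hadd, hconj, map_inv_of_map_mul hadd]
  ring

include hadd hconj in
theorem winding_commutatorMk_morse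
    (hcomm : ∀ h : ⁅xx, yy⁆ ∈ commutator F2, W ⟨⁅xx, yy⁆, h⟩ = 1) (n : ℕ) :
    W (commutatorMk (morse n).1 (morse n).2) = ∏ t ∈ Finset.range n, (1 - mono 1 1 ^ 2 ^ t) := by
  induction n with
  | zero => exact hcomm _
  | succ n ih =>
    have step := winding_commutatorMk_mul_swap W hadd hconj (morse n).1 (morse n).2
    rw [expx_morse_mul, expy_morse_mul] at step
    rw [Finset.prod_range_succ, ← ih, mono_one_one_pow, mul_comm, Nat.cast_pow, Nat.cast_ofNat]
    exact step

end Winding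

/-- For `m ≥ 3`, the word `u_m v_m⁻¹` lies in `F₂'` and its
winding invariant is `(1 - (XY)^{2^{m-3}})(1 - (XY)^{2^{m-4}}) ⋯ (1 - XY)`. -/
theorem winding_of_morse_words
    (W : commutator F2 → L)
    (hadd : ∀ z w : commutator F2, W (z * w) = W z + W w)
    (hcomm : ∀ h : ⁅xx, yy⁆ ∈ commutator F2, W ⟨⁅xx, yy⁆, h⟩ = 1)
    (hconj : ∀ (u : F2) (z : commutator F2) (h : u * ↑z * u⁻¹ ∈ commutator F2),
      W ⟨u * ↑z * u⁻¹, h⟩ = mono (expx u) (expy u) * W z) :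
    ∀ m : ℕ, 3 ≤ m →
      ∃ h : (morse (m - 1)).1 * ((morse (m - 1)).2)⁻¹ ∈ commutator F2,
        W ⟨(morse (m - 1)).1 * ((morse (m - 1)).2)⁻¹, h⟩ =
          ∏ t ∈ Finset.range (m - 2), (1 - (mono 1 1) ^ (2 ^ t)) := by
  intro m hm
  obtain ⟨n, rfl⟩ : ∃ n, m = n + 3 := ⟨m - 3, by omega⟩
  have hword : (morse (n + 3 - 1)).1 * ((morse (n + 3 - 1)).2)⁻¹ =
      commutatorMk (morse (n + 1)).1 (morse (n + 1)).2 :=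
    mul_mul_inv_swap_eq_commutatorElement _ _
  refine ⟨hword ▸ (commutatorMk _ _).2, ?_⟩
  simp only [hword]
  exact winding_commutatorMk_morse W hadd hconj hcomm (n + 1)
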